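/- arXiv:2504.18060 — 2 statements merged into one kernel-verified Lean document; each statement's English description precedes it below -/
import Mathlib

section
/- Let m ≥ 1 and let b_1, …, b_m be integers with each b_i ≥ 2, and set f(q) = Π_{i=1}^{m} h_{b_i}(q) for real 0 < q < 1. Then f(e^{−h}) > 0 for all sufficiently small real h > 0, and lim_{h→0⁺} h · log(f(e^{−h})) = −π² · Σ_{i : b_i odd} 1/(2 b_i). In particular, if a q-series f is a finite product of the functions h_b with b ≥ 2, then lim_{h→0⁺} h · log(f(e^{−h})) exists and lies in π²·ℚ. -/
/-- `ε_b(n)`: `(−1)^n` if `b` is odd; if `b` is even, `1` for `n ≥ 0` and `−1` for `n < 0`. -/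
def eps (b : ℕ) (n : ℤ) : ℤ :=
  if Odd b then (if Even n then 1 else -1)
  else (if 0 ≤ n then 1 else -1)

/-- The exponent `b·n(n+1)/2 − n` (an integer, nonnegative for `b ≥ 1`). -/
def hExp (b : ℕ) (n : ℤ) : ℤ := (b : ℤ) * (n * (n + 1)) / 2 - n

/-- `h_b(q) = Σ_{n∈ℤ} ε_b(n) q^{b n(n+1)/2 − n}` for real `q` (absolutely convergent for
`|q| < 1`; the exponents are nonnegative integers). -/
noncomputable def hR (b : ℕ) (q : ℝ) : ℝ :=
  ∑' n : ℤ, (eps b n : ℝ) * q ^ (hExp b n).toNat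

section Aux
open Filter Topology Real Complex

lemma hExp_two_mul (b : ℕ) (n : ℤ) : 2 * hExp b n = (b : ℤ) * (n * (n + 1)) - 2 * n := by
  have h2 : (2:ℤ) ∣ (b : ℤ) * (n * (n + 1)) :=
    Dvd.dvd.mul_left (Int.even_mul_succ_self n).two_dvd _
  rw [hExp, mul_sub, Int.mul_ediv_cancel' h2]

lemma sq_le_hExp {b : ℕ} (hb : 2 ≤ b) (n : ℤ) : n ^ 2 ≤ hExp b n := by
  have h1 := hExp_two_mul b n
  have hnn : 0 ≤ n * (n + 1) := by rcases le_or_gt 0 n with h | h <;> nlinarith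
  have hb' : (2:ℤ) ≤ (b:ℤ) := by exact_mod_cast hb
  nlinarith [mul_le_mul_of_nonneg_right hb' hnn]

lemma hExp_nonneg {b : ℕ} (hb : 2 ≤ b) (n : ℤ) : 0 ≤ hExp b n :=
  le_trans (sq_nonneg n) (sq_le_hExp hb n)

lemma self_le_hExp {b : ℕ} (hb : 2 ≤ b) (n : ℤ) : n ≤ hExp b n :=
  le_trans (by nlinarith [sq_nonneg (n-1)] : n ≤ n ^ 2) (sq_le_hExp hb n)

lemma hExp_neg_succ (b : ℕ) (n : ℤ) : hExp b (-(n+1)) = hExp b n + (2*n+1) := by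
  have h1 := hExp_two_mul b n
  have h2 := hExp_two_mul b (-(n+1))
  have : (b:ℤ) * (-(n+1) * (-(n+1) + 1)) = (b:ℤ) * (n * (n+1)) := by ring_nf
  omega


lemma hExp_zero (b : ℕ) : hExp b 0 = 0 := by simp [hExp]


lemma summable_pow_hExp {q : ℝ} (hq0 : 0 ≤ q) (hq1 : q < 1)
    (f : ℕ → ℤ) (hf : ∀ n : ℕ, (n : ℤ) ≤ f n) :
    Summable (fun n : ℕ => q ^ (f n).toNat) := by
  apply Summable.of_nonneg_of_le (fun n => by positivity)
    (fun n => ?_) (summable_geometric_of_lt_one hq0 hq1)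
  exact pow_le_pow_of_le_one hq0 hq1.le (by have := hf n; omega)

lemma summable_nat_side {b : ℕ} (hb : 2 ≤ b) {q : ℝ} (hq0 : 0 ≤ q) (hq1 : q < 1) :
    Summable (fun n : ℕ => q ^ (hExp b n).toNat) :=
  summable_pow_hExp hq0 hq1 _ (fun n => self_le_hExp hb n)

lemma summable_neg_side {b : ℕ} (hb : 2 ≤ b) {q : ℝ} (hq0 : 0 ≤ q) (hq1 : q < 1) :
    Summable (fun n : ℕ => q ^ (hExp b (-(n+1))).toNat) :=
  summable_pow_hExp hq0 hq1 _ (fun n => by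
    have h1 := hExp_neg_succ b n
    have h2 := hExp_nonneg hb (n : ℤ)
    omega)

lemma summable_hR_term {b : ℕ} (hb : 2 ≤ b) {q : ℝ} (hq0 : 0 ≤ q) (hq1 : q < 1) :
    Summable (fun n : ℤ => (eps b n : ℝ) * q ^ (hExp b n).toNat) := by
  apply Summable.of_nat_of_neg_add_one
  · apply Summable.of_norm
    apply Summable.of_nonneg_of_le (fun n => norm_nonneg _) (fun n => ?_)
      (summable_nat_side hb hq0 hq1)
    rw [norm_mul]
    have : ‖((eps b n : ℝ))‖ ≤ 1 := by
      simp only [eps]; split <;> split <;> simp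
    calc ‖((eps b n:ℤ) : ℝ)‖ * ‖q ^ (hExp b n).toNat‖
        ≤ 1 * ‖q ^ (hExp b n).toNat‖ := by
          apply mul_le_mul_of_nonneg_right _ (norm_nonneg _)
          simpa using this
      _ = q ^ (hExp b n).toNat := by
          rw [one_mul, norm_pow, Real.norm_of_nonneg hq0]
  · apply Summable.of_norm
    apply Summable.of_nonneg_of_le (fun n => norm_nonneg _) (fun n => ?_)
      (summable_neg_side hb hq0 hq1)
    rw [norm_mul]
    have h1 : ‖((eps b (-(n+1)) : ℤ) : ℝ)‖ ≤ 1 := by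
      simp only [eps]; split <;> split <;> simp
    calc ‖((eps b (-(n+1)):ℤ) : ℝ)‖ * ‖q ^ (hExp b (-(n+1))).toNat‖
        ≤ 1 * ‖q ^ (hExp b (-(n+1))).toNat‖ :=
          mul_le_mul_of_nonneg_right h1 (norm_nonneg _)
      _ = q ^ (hExp b (-(n+1))).toNat := by
          rw [one_mul, norm_pow, Real.norm_of_nonneg hq0]


lemma even_bounds {b : ℕ} (hb : 2 ≤ b) (hbe : ¬ Odd b) {q : ℝ} (hq0 : 0 < q) (hq1 : q < 1) :
    1 - q ≤ hR b q ∧ hR b q ≤ (1 - q)⁻¹ := by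
  have hq0' : (0:ℝ) ≤ q := hq0.le
  set f : ℤ → ℝ := fun n => (eps b n : ℝ) * q ^ (hExp b n).toNat with hf
  have hsum : Summable f := summable_hR_term hb hq0' hq1
  have hfn : ∀ n : ℕ, f n = q ^ (hExp b n).toNat := by
    intro n; simp only [hf, eps, if_neg hbe, if_pos (Int.natCast_nonneg n)]; push_cast; ring
  have hfneg : ∀ n : ℕ, f (-(n+1)) = -(q ^ (hExp b n).toNat * q ^ (2*n+1)) := by
    intro n
    have : ¬ (0:ℤ) ≤ -(n+1) := by omega
    simp only [hf, eps, if_neg hbe, if_neg this]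
    rw [hExp_neg_succ b n]
    have h2 : (hExp b n + (2*(n:ℤ)+1)).toNat = (hExp b n).toNat + (2*n+1) := by
      have := hExp_nonneg hb (n:ℤ); omega
    rw [h2, pow_add]
    push_cast; ring
  have hterm : ∀ n : ℕ, f n + f (-(n+1)) = q ^ (hExp b n).toNat * (1 - q ^ (2*n+1)) := by
    intro n; rw [hfn n, hfneg n]; ring
  have key : hR b q = ∑' n : ℕ, (f n + f (-(n+1))) := (tsum_nat_add_neg_add_one hsum).symm
  have hsum2 : Summable (fun n : ℕ => f n + f (-(n+1))) := hsum.nat_add_neg_add_one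
  constructor
  · rw [key]
    have h0 : (fun n : ℕ => f n + f (-(n+1))) 0 = 1 - q := by
      show f ((0:ℕ):ℤ) + f (-(((0:ℕ):ℤ)+1)) = 1 - q
      rw [hterm 0]; norm_num [hExp_zero b]
    calc 1 - q = (fun n : ℕ => f n + f (-(n+1))) 0 := h0.symm
      _ ≤ ∑' n : ℕ, (f n + f (-(n+1))) := by
          apply Summable.le_tsum hsum2 0
          intro i _
          rw [hterm i]
          have h1 : q ^ (2*i+1) ≤ 1 := pow_le_one₀ hq0' hq1.le
          have h2 : (0:ℝ) ≤ q ^ (hExp b i).toNat := by positivity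
          nlinarith
  · rw [key]
    calc ∑' n : ℕ, (f n + f (-(n+1)))
        ≤ ∑' n : ℕ, q ^ n := by
          apply Summable.tsum_le_tsum _ hsum2 (summable_geometric_of_lt_one hq0' hq1)
          intro n
          rw [hterm n]
          have h1 : q ^ (hExp b n).toNat * (1 - q ^ (2*n+1)) ≤ q ^ (hExp b n).toNat * 1 := by
            apply mul_le_mul_of_nonneg_left _ (by positivity)
            have : 0 ≤ q ^ (2*n+1) := by positivity
            linarith
          have h2 : q ^ (hExp b n).toNat ≤ q ^ n := by
            apply pow_le_pow_of_le_one hq0' hq1.le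
            have := self_le_hExp hb (n : ℤ); omega
          linarith
      _ = (1 - q)⁻¹ := tsum_geometric_of_lt_one hq0' hq1

lemma even_pos {b : ℕ} (hb : 2 ≤ b) (hbe : ¬ Odd b) {q : ℝ} (hq0 : 0 < q) (hq1 : q < 1) :
    0 < hR b q := lt_of_lt_of_le (by linarith) (even_bounds hb hbe hq0 hq1).1


lemma tendsto_mul_log_zero : Tendsto (fun h : ℝ => h * Real.log h) (𝓝[>] 0) (𝓝 0) := by
  have := tendsto_log_mul_rpow_nhdsGT_zero (r := 1) one_pos
  simpa [mul_comm, Real.rpow_one] using this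

-- useful squeeze: assume |F h| ≤ -(h*log h) + h^2 eventually then F → 0
lemma aux_squeeze {F : ℝ → ℝ}
    (hF : ∀ᶠ h in 𝓝[>] (0:ℝ), |F h| ≤ -(h * Real.log h) + h^2) :
    Tendsto F (𝓝[>] 0) (𝓝 0) := by
  have h1 : Tendsto (fun h : ℝ => -(h * Real.log h) + h^2) (𝓝[>] 0) (𝓝 0) := by
    have h2 : Tendsto (fun h : ℝ => h^2) (𝓝[>] 0) (𝓝 0) := by
      have : Tendsto (fun h : ℝ => h^2) (𝓝 (0:ℝ)) (𝓝 0) := by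
        simpa using (continuous_pow 2).tendsto (0:ℝ)
      exact this.mono_left nhdsWithin_le_nhds
    simpa using (tendsto_mul_log_zero.neg.add h2)
  apply squeeze_zero_norm' _ h1
  filter_upwards [hF] with h hh
  simpa [Real.norm_eq_abs] using hh


lemma even_main {b : ℕ} (hb : 2 ≤ b) (hbe : ¬ Odd b) :
    Tendsto (fun h : ℝ => h * Real.log (hR b (Real.exp (-h)))) (𝓝[>] 0) (𝓝 0) := by
  apply aux_squeeze
  filter_upwards [self_mem_nhdsWithin] with h hh
  have hh : (0:ℝ) < h := hh
  set q := Real.exp (-h) with hq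
  have hq0 : 0 < q := Real.exp_pos _
  have hq1 : q < 1 := by
    rw [hq]; exact Real.exp_lt_one_iff.mpr (by linarith)
  obtain ⟨hlo, hhi⟩ := even_bounds hb hbe hq0 hq1
  have hGpos : 0 < hR b q := lt_of_lt_of_le (by linarith) hlo
  have h1q : 0 < 1 - q := by linarith
  -- |log G| ≤ -log(1-q)
  have habs : |Real.log (hR b q)| ≤ -Real.log (1 - q) := by
    rw [abs_le]
    constructor
    · have := Real.log_le_log h1q hlo
      linarith
    · have h2 := Real.log_le_log hGpos hhi
      rw [Real.log_inv] at h2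
      linarith
  -- 1 - q ≥ h * q
  have hkey : h * q ≤ 1 - q := by
    have : 1 + h ≤ Real.exp h := Real.add_one_le_exp h |>.trans_eq' (by ring)
    have hq' : q = (Real.exp h)⁻¹ := by rw [hq, Real.exp_neg]
    have hep : 0 < Real.exp h := Real.exp_pos h
    rw [hq']
    rw [inv_eq_one_div, mul_one_div, div_le_iff₀ hep, sub_mul, one_div_mul_cancel (ne_of_gt hep)]
    nlinarith
  -- -log(1-q) ≤ -log h + h
  have hlog2 : -Real.log (1 - q) ≤ -Real.log h + h := by
    have hhq : 0 < h * q := by positivity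
    have := Real.log_le_log hhq hkey
    rw [Real.log_mul (ne_of_gt hh) (ne_of_gt hq0), hq, Real.log_exp] at this
    linarith
  calc |h * Real.log (hR b q)| = h * |Real.log (hR b q)| := by
        rw [abs_mul, abs_of_pos hh]
    _ ≤ h * (-Real.log h + h) := by
        apply mul_le_mul_of_nonneg_left _ hh.le
        linarith
    _ = -(h * Real.log h) + h^2 := by ring


noncomputable def zf (B h : ℝ) : ℂ := (1/2 : ℂ) + ((h * (B-2) / (4*π) : ℝ) : ℂ) * I
noncomputable def tf (B h : ℝ) : ℂ := ((h * B / (2*π) : ℝ) : ℂ) * I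

lemma theta_eq_hR {b : ℕ} (hb : 2 ≤ b) (hbo : Odd b) {h : ℝ} (hh : 0 < h) :
    jacobiTheta₂ (zf b h) (tf b h) = ((hR b (Real.exp (-h)) : ℝ) : ℂ) := by
  rw [hR, Complex.ofReal_tsum, jacobiTheta₂]
  apply tsum_congr
  intro n
  rw [jacobiTheta₂_term]
  have hE : ((hExp b n : ℤ) : ℝ) = ((b:ℝ) * n^2 + ((b:ℝ)-2) * n)/2 := by
    have h2 := hExp_two_mul b n
    have h3 : (2:ℝ) * ((hExp b n : ℤ) : ℝ) = (b:ℝ) * ((n:ℝ) * ((n:ℝ)+1)) - 2*(n:ℝ) := by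
      exact_mod_cast h2
    nlinarith [h3]
  have hexpeq : 2 * (π:ℂ) * I * n * (zf b h) + (π:ℂ) * I * n^2 * (tf b h)
      = ((-h * ((hExp b n : ℤ):ℝ) : ℝ) : ℂ) + ((π * n : ℝ) : ℂ) * I := by
    rw [zf, tf]
    have hE' : ((-h * ((hExp b n : ℤ):ℝ) : ℝ) : ℂ)
        = -(h:ℂ) * (((b:ℝ):ℂ) * (n:ℂ)^2 + (((b:ℝ):ℂ)-2) * (n:ℂ))/2 := by
      push_cast [hE]; ring
    rw [hE']
    have hπ : (π:ℂ) ≠ 0 := by exact_mod_cast Real.pi_ne_zero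
    push_cast
    field_simp
    ring_nf
    simp only [Complex.I_sq]
    ring
  rw [hexpeq, Complex.exp_add]
  have h1 : Complex.exp (((-h * ((hExp b n : ℤ):ℝ) : ℝ) : ℂ)) =
      ((Real.exp (-h) ^ (hExp b n).toNat : ℝ) : ℂ) := by
    rw [← Complex.ofReal_exp]
    congr 1
    rw [← Real.exp_nat_mul]
    congr 1
    rw [show (((hExp b n).toNat : ℕ) : ℝ) = ((hExp b n : ℤ):ℝ) by
      exact_mod_cast congrArg (Int.cast : ℤ → ℝ) (Int.toNat_of_nonneg (hExp_nonneg hb n))]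
    ring
  have h2 : Complex.exp (((π * n : ℝ) : ℂ) * I) = ((eps b n : ℤ) : ℂ) := by
    have : ((π * n : ℝ) : ℂ) * I = (n:ℤ) * ((π:ℂ) * I) := by push_cast; ring
    rw [this, Complex.exp_int_mul, Complex.exp_pi_mul_I]
    rw [eps, if_pos hbo]
    rcases Int.even_or_odd n with he | ho
    · rw [if_pos he, he.neg_one_zpow]; norm_num
    · rw [if_neg (Int.not_even_iff_odd.mpr ho), ho.neg_one_zpow]; norm_num
  rw [h1, h2]
  push_cast
  ring


noncomputable def wf (B h : ℝ) : ℂ := (((B-2) / (2*B) : ℝ) : ℂ) + ((-π / (h*B) : ℝ) : ℂ) * I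
noncomputable def sf (B h : ℝ) : ℂ := ((2*π / (h*B) : ℝ) : ℂ) * I
noncomputable def cf (B h : ℝ) : ℝ := -π^2/(2*B*h) + h*(B-2)^2/(8*B)
noncomputable def df (B : ℝ) : ℝ := π*(B-2)/(2*B)

lemma theta_funceq {B h : ℝ} (hB : 0 < B) (hh : 0 < h) :
    jacobiTheta₂ (zf B h) (tf B h) =
      (((h*B/(2*π)) ^ (-(1/2) : ℝ) : ℝ) : ℂ) * ((Real.exp (cf B h) : ℝ) : ℂ) *
        (Complex.exp (((-(df B) : ℝ) : ℂ) * I) * jacobiTheta₂ (wf B h) (sf B h)) := by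
  have hπ : (0:ℝ) < π := Real.pi_pos
  have hπC : (π:ℂ) ≠ 0 := by exact_mod_cast hπ.ne'
  have hhC : (h:ℂ) ≠ 0 := by exact_mod_cast hh.ne'
  have hBC : (B:ℂ) ≠ 0 := by exact_mod_cast hB.ne'
  have ht0 : tf B h ≠ 0 := by
    rw [tf]
    apply mul_ne_zero _ I_ne_zero
    rw [Ne, Complex.ofReal_eq_zero]
    positivity
  rw [jacobiTheta₂_functional_equation (zf B h) (tf B h)]
  -- identify the pieces
  have hzw : zf B h / tf B h = wf B h := by
    rw [eq_comm, eq_div_iff ht0, zf, tf, wf]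
    push_cast
    field_simp
    ring_nf
    simp only [Complex.I_sq]
    ring
  have hst : -1 / tf B h = sf B h := by
    rw [div_eq_iff ht0, sf, tf]
    push_cast
    field_simp
    ring_nf
    simp only [Complex.I_sq]
  have hpre : 1 / (-I * tf B h) ^ (1/2 : ℂ) = (((h*B/(2*π)) ^ (-(1/2) : ℝ) : ℝ) : ℂ) := by
    have h1 : -I * tf B h = ((h*B/(2*π) : ℝ) : ℂ) := by
      rw [tf]
      rw [neg_mul, mul_comm]
      rw [mul_assoc, Complex.I_mul_I]
      ring
    rw [h1]
    have hr : (0:ℝ) ≤ h*B/(2*π) := by positivity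
    rw [show ((1:ℂ)/2) = ((1/2 : ℝ) : ℂ) by norm_num]
    rw [← Complex.ofReal_cpow hr]
    rw [← Complex.ofReal_one, ← Complex.ofReal_div]
    rw [Real.rpow_neg hr]
    simp
  have hexp : Complex.exp (-π * I * (zf B h)^2 / tf B h)
      = ((Real.exp (cf B h) : ℝ) : ℂ) * Complex.exp (((-(df B) : ℝ) : ℂ) * I) := by
    have harg : -π * I * (zf B h)^2 / tf B h = ((cf B h : ℝ) : ℂ) + ((-(df B) : ℝ) : ℂ) * I := by
      have hz2 : (zf B h)^2 = ((1/4 - (h*(B-2)/(4*π))^2 : ℝ) : ℂ)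
          + ((h*(B-2)/(4*π) : ℝ) : ℂ) * I := by
        rw [zf]
        push_cast
        linear_combination ((h:ℂ)*((B:ℂ)-2)/(4*(π:ℂ)))^2 * Complex.I_sq
      have e1 : π * (h*(B-2)/(4*π)) = df B * (h*B/(2*π)) := by rw [df]; field_simp; ring
      have e2 : -(π * (1/4 - (h*(B-2)/(4*π))^2)) = cf B h * (h*B/(2*π)) := by
        rw [cf]; field_simp; ring
      have e1' : (π:ℂ) * ((h*(B-2)/(4*π) : ℝ):ℂ) = ((df B : ℝ):ℂ) * ((h*B/(2*π) : ℝ):ℂ) := by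
        exact_mod_cast congrArg (Complex.ofReal : ℝ → ℂ) e1
      have e2' : -((π:ℂ) * ((1/4 - (h*(B-2)/(4*π))^2 : ℝ):ℂ))
          = ((cf B h : ℝ):ℂ) * ((h*B/(2*π) : ℝ):ℂ) := by
        exact_mod_cast congrArg (Complex.ofReal : ℝ → ℂ) e2
      rw [div_eq_iff ht0, hz2, tf]
      push_cast at e1' e2' ⊢
      linear_combination (Complex.I * e2') - ((Complex.I)^(2:ℕ) * e1')
    rw [harg, Complex.exp_add, ← Complex.ofReal_exp]
  rw [hzw, hst, hpre, hexp]
  ring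


lemma term_formula {B h : ℝ} (hB : 0 < B) (hh : 0 < h) (n : ℤ) :
    jacobiTheta₂_term n (wf B h) (sf B h)
      = ((Real.exp ((2*π^2/B) * (n - n^2) / h) : ℝ) : ℂ)
        * Complex.exp (((π * n * (B-2) / B : ℝ) : ℂ) * I) := by
  rw [jacobiTheta₂_term, wf, sf]
  rw [Complex.ofReal_exp, ← Complex.exp_add]
  congr 1
  have hπ : (0:ℝ) < π := Real.pi_pos
  have e1 : (2*π^2/B) * ((n:ℝ) - (n:ℝ)^2) / h = 2*π*(n:ℝ)*(-(-π/(h*B))) + π*(n:ℝ)^2*(-(2*π/(h*B))) := by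
    field_simp
    ring
  push_cast [e1]
  linear_combination (2*(π:ℂ)*(n:ℂ)*(-(π:ℂ)/((h:ℂ)*(B:ℂ))) + (π:ℂ)*(n:ℂ)^2*(2*(π:ℂ)/((h:ℂ)*(B:ℂ)))) * Complex.I_sq

lemma norm_term {B h : ℝ} (hB : 0 < B) (hh : 0 < h) (n : ℤ) :
    ‖jacobiTheta₂_term n (wf B h) (sf B h)‖ = Real.exp ((2*π^2/B) * (n - n^2) / h) := by
  rw [term_formula hB hh n, norm_mul, Complex.norm_real, Real.norm_of_nonneg (Real.exp_pos _).le,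
    Complex.norm_exp_ofReal_mul_I, mul_one]

lemma theta_limit {B : ℝ} (hB : 0 < B) :
    Tendsto (fun h : ℝ => jacobiTheta₂ (wf B h) (sf B h)) (𝓝[>] 0)
      (𝓝 (1 + Complex.exp (((π * (B-2) / B : ℝ) : ℂ) * I))) := by
  have hπ : (0:ℝ) < π := Real.pi_pos
  have hns : ∀ n : ℤ, (n:ℝ) - (n:ℝ)^2 ≤ 0 := by
    intro n
    have : (n:ℤ) ≤ n^2 := by nlinarith [sq_nonneg n, sq_nonneg (n-1)]
    have : (n:ℝ) ≤ (n:ℝ)^2 := by exact_mod_cast this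
    linarith
  set g : ℤ → ℂ := fun n =>
    if n = 0 then 1 else if n = 1 then Complex.exp (((π * (B-2) / B : ℝ) : ℂ) * I) else 0 with hg
  have hkey : Tendsto (fun h : ℝ => ∑' n : ℤ, jacobiTheta₂_term n (wf B h) (sf B h)) (𝓝[>] 0)
      (𝓝 (∑' n : ℤ, g n)) := by
    apply tendsto_tsum_of_dominated_convergence
      (bound := fun n : ℤ => Real.exp ((2*π^2/B) * (n - n^2)))
    · -- summability of bound
      have h1 : Summable (fun n : ℤ => jacobiTheta₂_term n (wf B 1) (sf B 1)) := by
        rw [summable_jacobiTheta₂_term_iff]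
        rw [sf]
        simp only [Complex.mul_im, Complex.ofReal_re, Complex.I_im, Complex.ofReal_im,
          Complex.I_re, mul_zero, mul_one, zero_mul]
        positivity
      have := h1.norm
      apply this.congr
      intro n
      rw [norm_term hB one_pos n, div_one]
    · -- pointwise tendsto
      intro n
      rcases eq_or_ne n 0 with rfl | hn0
      · have : ∀ h : ℝ, h ∈ Set.Ioi (0:ℝ) → jacobiTheta₂_term (0:ℤ) (wf B h) (sf B h) = 1 := by
          intro h hh
          rw [term_formula hB hh]
          push_cast
          simp
        rw [hg]
        simp only [if_pos rfl]
        exact tendsto_const_nhds.congr' (by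
          filter_upwards [self_mem_nhdsWithin] with h hh
          exact (this h hh).symm)
      rcases eq_or_ne n 1 with rfl | hn1
      · have : ∀ h : ℝ, h ∈ Set.Ioi (0:ℝ) →
            jacobiTheta₂_term (1:ℤ) (wf B h) (sf B h)
              = Complex.exp (((π * (B-2) / B : ℝ) : ℂ) * I) := by
          intro h hh
          rw [term_formula hB hh]
          norm_num
        rw [hg]
        simp only [if_neg one_ne_zero, if_pos rfl]
        exact tendsto_const_nhds.congr' (by
          filter_upwards [self_mem_nhdsWithin] with h hh
          exact (this h hh).symm)
      · -- n ∉ {0, 1} : term → 0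
        have hneg : (2*π^2/B) * ((n:ℝ) - (n:ℝ)^2) < 0 := by
          have h1 : (n:ℝ) - (n:ℝ)^2 < 0 := by
            have h2 : (n:ℤ) < n^2 := by
              rcases lt_or_ge n 0 with h | h
              · nlinarith
              · have : 2 ≤ n := by omega
                nlinarith
            have : (n:ℝ) < (n:ℝ)^2 := by exact_mod_cast h2
            linarith
          have h3 : 0 < 2*π^2/B := by positivity
          exact mul_neg_of_pos_of_neg h3 h1
        rw [hg]
        simp only [if_neg hn0, if_neg hn1]
        have hlim : Tendsto (fun h : ℝ => Real.exp ((2*π^2/B) * ((n:ℝ) - (n:ℝ)^2) / h))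
            (𝓝[>] 0) (𝓝 0) := by
          apply Real.tendsto_exp_atBot.comp
          have h4 : Tendsto (fun h : ℝ => h⁻¹) (𝓝[>] (0:ℝ)) atTop := tendsto_inv_nhdsGT_zero
          have h5 := h4.const_mul_atTop_of_neg hneg
          exact h5.congr (fun h => by ring)
        have : Tendsto (fun h : ℝ => ((Real.exp ((2*π^2/B) * ((n:ℝ) - (n:ℝ)^2) / h) : ℝ) : ℂ))
            (𝓝[>] 0) (𝓝 0) := by
          rw [show ((0:ℂ)) = ((0:ℝ):ℂ) by norm_num]
          exact (Complex.continuous_ofReal.tendsto 0).comp hlim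
        have := this.mul_const (Complex.exp (((π * (n:ℝ) * (B-2) / B : ℝ) : ℂ) * I))
        rw [zero_mul] at this
        apply this.congr'
        filter_upwards [self_mem_nhdsWithin] with h hh
        exact (term_formula hB hh n).symm
    · -- bound
      filter_upwards [Ioc_mem_nhdsGT_of_mem (Set.left_mem_Ico.mpr one_pos)] with h hh n
      obtain ⟨hh0, hh1⟩ := hh
      rw [norm_term hB hh0 n]
      apply Real.exp_le_exp.mpr
      set k := (2*π^2/B) * ((n:ℝ) - (n:ℝ)^2) with hk
      have hkn : k ≤ 0 := mul_nonpos_of_nonneg_of_nonpos (by positivity) (hns n)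
      rw [div_le_iff₀ hh0]
      nlinarith
  have htsum : ∑' n : ℤ, g n = 1 + Complex.exp (((π * (B-2) / B : ℝ) : ℂ) * I) := by
    rw [tsum_eq_sum (s := ({0, 1} : Finset ℤ)) (by
      intro n hn
      simp only [Finset.mem_insert, Finset.mem_singleton] at hn
      push_neg at hn
      rw [hg]
      simp only [if_neg hn.1, if_neg hn.2])]
    rw [Finset.sum_insert (by norm_num), Finset.sum_singleton, hg]
    norm_num
  rw [← htsum]
  exact hkey.congr (fun h => rfl)


noncomputable def Pf (B h : ℝ) : ℝ := (h*B/(2*π)) ^ (-(1/2) : ℝ) * Real.exp (cf B h)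

lemma odd_main {b : ℕ} (hb : 2 ≤ b) (hbo : Odd b) :
    (∀ᶠ h in 𝓝[>] (0:ℝ), 0 < hR b (Real.exp (-h))) ∧
    Tendsto (fun h : ℝ => h * Real.log (hR b (Real.exp (-h)))) (𝓝[>] 0)
      (𝓝 (-(π^2 / (2 * (b:ℝ))))) := by
  have hπ : (0:ℝ) < π := Real.pi_pos
  set B := (b:ℝ) with hBdef
  have hB2 : (2:ℝ) ≤ B := by rw [hBdef]; exact_mod_cast hb
  have hB : 0 < B := by linarith
  have hPpos : ∀ h : ℝ, 0 < h → 0 < Pf B h := by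
    intro h hh
    apply mul_pos (Real.rpow_pos_of_pos (by positivity) _) (Real.exp_pos _)
  -- the ratio identity
  have hratio : ∀ h : ℝ, 0 < h →
      Complex.exp (((-(df B) : ℝ) : ℂ) * I) * jacobiTheta₂ (wf B h) (sf B h)
        = ((hR b (Real.exp (-h)) / Pf B h : ℝ) : ℂ) := by
    intro h hh
    have h1 : ((hR b (Real.exp (-h)) : ℝ) : ℂ) = ((Pf B h : ℝ) : ℂ) *
        (Complex.exp (((-(df B) : ℝ) : ℂ) * I) * jacobiTheta₂ (wf B h) (sf B h)) := by
      rw [← theta_eq_hR hb hbo hh, theta_funceq hB hh, Pf]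
      push_cast
      ring
    have hP0 : ((Pf B h : ℝ) : ℂ) ≠ 0 := by
      exact_mod_cast (hPpos h hh).ne'
    rw [Complex.ofReal_div]
    rw [h1]
    field_simp
  -- the limit of the ratio, as a real number
  have h2d : (π * (B-2) / B : ℝ) = 2 * df B := by rw [df]; field_simp
  have hΦlim : Tendsto (fun h : ℝ =>
      Complex.exp (((-(df B) : ℝ) : ℂ) * I) * jacobiTheta₂ (wf B h) (sf B h)) (𝓝[>] 0)
      (𝓝 ((2 * Real.cos (df B) : ℝ) : ℂ)) := by
    have hlim := (theta_limit hB).const_mul (Complex.exp (((-(df B) : ℝ) : ℂ) * I))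
    have heq : Complex.exp (((-(df B) : ℝ) : ℂ) * I) *
        (1 + Complex.exp (((π * (B-2) / B : ℝ) : ℂ) * I)) = ((2 * Real.cos (df B) : ℝ) : ℂ) := by
      rw [h2d, mul_add, mul_one, ← Complex.exp_add]
      have e1 : ((-(df B) : ℝ) : ℂ) * I + ((2 * df B : ℝ) : ℂ) * I = ((df B : ℝ) : ℂ) * I := by
        push_cast; ring
      rw [e1]
      rw [Complex.exp_mul_I, Complex.exp_mul_I]
      simp only [← Complex.ofReal_cos, ← Complex.ofReal_sin, Real.cos_neg, Real.sin_neg]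
      push_cast
      ring
    rw [← heq]
    exact hlim
  -- real ratio limit
  set L := 2 * Real.cos (df B) with hL
  have hLpos : 0 < L := by
    rw [hL]
    have hd0 : 0 ≤ df B := by
      rw [df]
      have : 0 ≤ B - 2 := by linarith
      positivity
    have hd1 : df B < π/2 := by
      rw [df, div_lt_div_iff₀ (by positivity) two_pos]
      nlinarith
    have := Real.cos_pos_of_mem_Ioo (Set.mem_Ioo.mpr ⟨by linarith, hd1⟩)
    linarith
  have hratio_lim : Tendsto (fun h : ℝ => hR b (Real.exp (-h)) / Pf B h) (𝓝[>] 0) (𝓝 L) := by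
    have h1 := (Complex.continuous_re.tendsto _).comp hΦlim
    simp only [Complex.ofReal_re] at h1
    apply h1.congr'
    filter_upwards [self_mem_nhdsWithin] with h hh
    rw [Function.comp_apply, hratio h hh, Complex.ofReal_re]
  have hev : ∀ᶠ h in 𝓝[>] (0:ℝ), 0 < hR b (Real.exp (-h)) := by
    filter_upwards [hratio_lim.eventually (eventually_gt_nhds (half_lt_self hLpos)),
      self_mem_nhdsWithin] with h h1 h2
    have hh : (0:ℝ) < h := h2
    have hP := hPpos h hh
    have : 0 < hR b (Real.exp (-h)) / Pf B h := lt_trans (by linarith) h1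
    have := mul_pos this hP
    rwa [div_mul_cancel₀ _ hP.ne'] at this
  refine ⟨hev, ?_⟩
  -- split the log
  have hsplit : ∀ᶠ h in 𝓝[>] (0:ℝ),
      h * Real.log (hR b (Real.exp (-h)))
        = (-(1/2)) * (h * Real.log h) + h * ((-(1/2)) * Real.log (B/(2*π)))
          + (-(π^2/(2*B)) + h^2*(B-2)^2/(8*B))
          + h * Real.log (hR b (Real.exp (-h)) / Pf B h) := by
    filter_upwards [hev, self_mem_nhdsWithin] with h hpos h2
    have hh : (0:ℝ) < h := h2
    have hP := hPpos h hh
    have hQ : 0 < hR b (Real.exp (-h)) / Pf B h := div_pos hpos hP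
    have hGeq : hR b (Real.exp (-h)) = Pf B h * (hR b (Real.exp (-h)) / Pf B h) := by
      rw [mul_div_cancel₀ _ hP.ne']
    rw [hGeq, Real.log_mul hP.ne' hQ.ne', Pf,
      Real.log_mul (Real.rpow_pos_of_pos (by positivity) _).ne' (Real.exp_pos _).ne',
      Real.log_rpow (by positivity), Real.log_exp,
      show h * B / (2*π) = h * (B / (2*π)) by ring,
      Real.log_mul hh.ne' (by positivity : (B/(2*π):ℝ) ≠ 0), cf]
    field_simp
    ring
  -- limits of components
  have lim1 : Tendsto (fun h : ℝ => (-(1/2)) * (h * Real.log h)) (𝓝[>] 0) (𝓝 0) := by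
    simpa using tendsto_mul_log_zero.const_mul (-(1/2) : ℝ)
  have lim2 : Tendsto (fun h : ℝ => h * ((-(1/2)) * Real.log (B/(2*π)))) (𝓝[>] 0) (𝓝 0) := by
    have hid : Tendsto (fun h : ℝ => h) (𝓝[>] (0:ℝ)) (𝓝 0) :=
      tendsto_id.mono_left nhdsWithin_le_nhds
    simpa using hid.mul_const ((-(1/2)) * Real.log (B/(2*π)))
  have lim3 : Tendsto (fun h : ℝ => -(π^2/(2*B)) + h^2*(B-2)^2/(8*B)) (𝓝[>] 0)
      (𝓝 (-(π^2/(2*B)))) := by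
    have hid : Tendsto (fun h : ℝ => h^2*(B-2)^2/(8*B)) (𝓝[>] (0:ℝ)) (𝓝 0) := by
      have : Tendsto (fun h : ℝ => h^2*(B-2)^2/(8*B)) (𝓝 (0:ℝ)) (𝓝 (0^2*(B-2)^2/(8*B))) := by
        apply Tendsto.div_const
        exact ((continuous_pow 2).tendsto 0).mul_const _
      simpa using this.mono_left nhdsWithin_le_nhds
    simpa using (tendsto_const_nhds (x := -(π^2/(2*B)))).add hid
  have lim4 : Tendsto (fun h : ℝ => h * Real.log (hR b (Real.exp (-h)) / Pf B h)) (𝓝[>] 0)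
      (𝓝 0) := by
    have hid : Tendsto (fun h : ℝ => h) (𝓝[>] (0:ℝ)) (𝓝 0) :=
      tendsto_id.mono_left nhdsWithin_le_nhds
    have hlog : Tendsto (fun h : ℝ => Real.log (hR b (Real.exp (-h)) / Pf B h)) (𝓝[>] 0)
        (𝓝 (Real.log L)) :=
      ((Real.continuousAt_log hLpos.ne').tendsto).comp hratio_lim
    simpa using hid.mul hlog
  have total := ((lim1.add lim2).add lim3).add lim4
  simp only [zero_add, add_zero] at total
  apply total.congr'
  filter_upwards [hsplit] with h hh
  rw [hh]


end Aux

open Filter Topology Real Complex in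
/-- For `f(q) = Π_{i=1}^{m} h_{b_i}(q)` with each `b_i ≥ 2`: `f(e^{−h}) > 0` for all
sufficiently small real `h > 0`, and `lim_{h→0⁺} h·log(f(e^{−h})) = −π²·Σ_{i : b_i odd} 1/(2b_i)`;
in particular, this limit exists and lies in `π²·ℚ`. -/
theorem prod_hb_log_asymptotics (m : ℕ) (hm : 1 ≤ m) (b : Fin m → ℕ)
    (hb : ∀ i, 2 ≤ b i) :
    (∀ᶠ h in nhdsWithin (0 : ℝ) (Set.Ioi 0), 0 < ∏ i, hR (b i) (Real.exp (-h))) ∧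
    Filter.Tendsto (fun h : ℝ => h * Real.log (∏ i, hR (b i) (Real.exp (-h))))
      (nhdsWithin 0 (Set.Ioi 0))
      (nhds (-(Real.pi ^ 2 *
        ∑ i ∈ Finset.univ.filter (fun i => Odd (b i)), 1 / (2 * (b i : ℝ))))) ∧
    ∃ r : ℚ,
      -(Real.pi ^ 2 * ∑ i ∈ Finset.univ.filter (fun i => Odd (b i)), 1 / (2 * (b i : ℝ)))
        = Real.pi ^ 2 * (r : ℝ) := by
  -- per-factor facts
  have key : ∀ i : Fin m,
      (∀ᶠ h in 𝓝[>] (0:ℝ), 0 < hR (b i) (Real.exp (-h))) ∧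
      Tendsto (fun h : ℝ => h * Real.log (hR (b i) (Real.exp (-h)))) (𝓝[>] 0)
        (𝓝 (if Odd (b i) then -(π^2 / (2 * (b i : ℝ))) else 0)) := by
    intro i
    by_cases hodd : Odd (b i)
    · rw [if_pos hodd]
      exact odd_main (hb i) hodd
    · rw [if_neg hodd]
      refine ⟨?_, even_main (hb i) hodd⟩
      filter_upwards [self_mem_nhdsWithin] with h hh
      have hh : (0:ℝ) < h := hh
      exact even_pos (hb i) hodd (Real.exp_pos _)
        (Real.exp_lt_one_iff.mpr (by linarith))
  have hpos : ∀ᶠ h in 𝓝[>] (0:ℝ), ∀ i, 0 < hR (b i) (Real.exp (-h)) :=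
    eventually_all.mpr (fun i => (key i).1)
  have hpos' : ∀ᶠ h in 𝓝[>] (0:ℝ), 0 < ∏ i, hR (b i) (Real.exp (-h)) := by
    filter_upwards [hpos] with h hh
    exact Finset.prod_pos (fun i _ => hh i)
  refine ⟨hpos', ?_, ?_⟩
  · -- tendsto
    have hsum : Tendsto (fun h : ℝ => ∑ i, h * Real.log (hR (b i) (Real.exp (-h)))) (𝓝[>] 0)
        (𝓝 (∑ i, if Odd (b i) then -(π^2 / (2 * (b i : ℝ))) else 0)) :=
      tendsto_finset_sum _ (fun i _ => (key i).2)
    have hval : (∑ i, if Odd (b i) then -(π^2 / (2 * (b i : ℝ))) else 0)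
        = -(π ^ 2 * ∑ i ∈ Finset.univ.filter (fun i => Odd (b i)), 1 / (2 * (b i : ℝ))) := by
      rw [← Finset.sum_filter, Finset.mul_sum, ← Finset.sum_neg_distrib]
      apply Finset.sum_congr rfl
      intro i _
      rw [mul_one_div]
    rw [← hval]
    apply hsum.congr'
    filter_upwards [hpos] with h hh
    rw [← Finset.mul_sum]
    congr 1
    rw [Real.log_prod]
    intro i _
    exact (hh i).ne'
  · -- rationality
    refine ⟨-∑ i ∈ Finset.univ.filter (fun i => Odd (b i)), 1 / (2 * (b i : ℚ)), ?_⟩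
    have hcast : ((-∑ i ∈ Finset.univ.filter (fun i => Odd (b i)), 1 / (2 * (b i : ℚ)) : ℚ) : ℝ)
        = -∑ i ∈ Finset.univ.filter (fun i => Odd (b i)), 1 / (2 * (b i : ℝ)) := by
      push_cast
      ring
    rw [hcast]
    ring
end

section
/- As formal power series in ℤ[[q]], the tail of the knot 8₁₈ is not h_3⁴: (q)_∞² · Σ_{a,b ≥ 0} (−1)^{a+b} (q^{a(a+1)/2 + b(b+1)/2} / ((q)_a (q)_b)) · [a+b choose b]_q ≠ h_3(q)⁴, where [a+b choose b]_q = (q)_{a+b} / ((q)_a (q)_b) is the q-binomial coefficient. (Indeed, the left-hand side begins 1 − 4q + 2q² + 9q³ − ⋯ while h_3⁴ = (q)_∞⁴ begins 1 − 4q + 2q² + 8q³ − ⋯.) -/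
/-- `h_b(q) = Σ_{n∈ℤ} ε_b(n) q^{b n(n+1)/2 − n}` in `ℤ[[q]]`. -/
noncomputable def hSeries (b : ℕ) : PowerSeries ℤ :=
  PowerSeries.mk fun m => ∑' n : ℤ, if hExp b n = (m : ℤ) then eps b n else 0

/-- The finite `q`-Pochhammer symbol `(q)_n = Π_{k=1}^{n} (1 − q^k)` in `ℤ[[q]]`. -/
noncomputable def qPoch (n : ℕ) : PowerSeries ℤ :=
  ∏ k ∈ Finset.range n, (1 - (PowerSeries.X : PowerSeries ℤ) ^ (k + 1))

/-- The multiplicative inverse `1/(q)_n` in `ℤ[[q]]` (the constant coefficient of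
`(q)_n` is `1`, so it is invertible). -/
noncomputable def qPochInv (n : ℕ) : PowerSeries ℤ :=
  PowerSeries.invOfUnit (qPoch n) 1

/-- `(q)_∞ = Π_{k≥1} (1 − q^k) ∈ ℤ[[q]]`: the coefficient of `q^m` equals the coefficient
of `q^m` in any partial product `(q)_N` with `N > m`. -/
noncomputable def qPochInf : PowerSeries ℤ :=
  PowerSeries.mk fun m => PowerSeries.coeff (R := ℤ) m (qPoch (m + 1))

/-- The sum `Σ_i F_i` of a family of power series, convergent in the formal power series
topology: the coefficient of `q^m` is the (finite) sum of the `q^m`-coefficients. -/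
noncomputable def seriesSum {ι : Type*} (F : ι → PowerSeries ℤ) : PowerSeries ℤ :=
  PowerSeries.mk fun m => ∑' i, PowerSeries.coeff (R := ℤ) m (F i)


/-- The `q`-binomial coefficient `[n choose k]_q = (q)_n / ((q)_k (q)_{n−k})` in `ℤ[[q]]`. -/
noncomputable def qBinom (n k : ℕ) : PowerSeries ℤ :=
  qPoch n * qPochInv k * qPochInv (n - k)

open PowerSeries Finset

/- ### Auxiliary lemmas -/

lemma coeff_mul_range (f g : PowerSeries ℤ) (n : ℕ) :
    PowerSeries.coeff (R := ℤ) n (f * g) = ∑ i ∈ Finset.range (n+1),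
      PowerSeries.coeff (R := ℤ) i f * PowerSeries.coeff (R := ℤ) (n - i) g := by
  rw [PowerSeries.coeff_mul, Finset.Nat.sum_antidiagonal_eq_sum_range_succ_mk]

lemma qPoch0_eq : qPoch 0 = 1 := by simp [qPoch]
lemma qPoch1_eq : qPoch 1 = 1 - X := by simp [qPoch]
lemma qPoch2_eq : qPoch 2 = 1 - X - X^2 + X^3 := by
  simp [qPoch, Finset.prod_range_succ]; ring
lemma qPoch3_eq : qPoch 3 = 1 - X - X^2 + X^4 + X^5 - X^6 := by
  simp [qPoch, Finset.prod_range_succ]; ring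
lemma qPoch4_eq : qPoch 4 = qPoch 3 * (1 - X^(3+1)) := Finset.prod_range_succ _ 3
lemma qPoch2_eq' : qPoch 2 = qPoch 1 * (1 - X^(1+1)) := Finset.prod_range_succ _ 1

lemma cP1 (k : ℕ) (hk : k ≤ 3) : PowerSeries.coeff (R := ℤ) k (qPoch 1) =
    if k = 0 then 1 else if k = 1 then -1 else 0 := by
  rw [qPoch1_eq]; interval_cases k <;> simp [PowerSeries.coeff_X]
lemma cP2 (k : ℕ) (hk : k ≤ 3) : PowerSeries.coeff (R := ℤ) k (qPoch 2) =
    if k = 0 then 1 else if k = 3 then 1 else -1 := by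
  rw [qPoch2_eq]; interval_cases k <;>
    simp [PowerSeries.coeff_X, PowerSeries.coeff_X_pow, PowerSeries.coeff_one]
lemma cP3 (k : ℕ) (hk : k ≤ 3) : PowerSeries.coeff (R := ℤ) k (qPoch 3) =
    if k = 0 then 1 else if k = 3 then 0 else -1 := by
  rw [qPoch3_eq]; interval_cases k <;>
    simp [PowerSeries.coeff_X, PowerSeries.coeff_X_pow, PowerSeries.coeff_one]
lemma cP4 : PowerSeries.coeff (R := ℤ) 3 (qPoch 4) = 0 := by
  rw [qPoch4_eq, coeff_mul_range]
  rw [Finset.sum_range_succ, Finset.sum_range_succ, Finset.sum_range_succ,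
    Finset.sum_range_succ, Finset.sum_range_zero]
  rw [cP3 0 (by norm_num), cP3 1 (by norm_num), cP3 2 (by norm_num), cP3 3 (by norm_num)]
  simp [PowerSeries.coeff_X_pow, PowerSeries.coeff_one]

lemma qPoch_const (n : ℕ) : PowerSeries.constantCoeff (R := ℤ) (qPoch n) = 1 := by
  simp [qPoch]
lemma poch_mul_inv (n : ℕ) : qPoch n * qPochInv n = 1 :=
  PowerSeries.mul_invOfUnit _ _ (by simp [qPoch_const])

lemma cI0 : qPochInv 0 = 1 := by
  have := poch_mul_inv 0; rwa [qPoch0_eq, one_mul] at this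

lemma cI1_0 : PowerSeries.coeff (R := ℤ) 0 (qPochInv 1) = 1 := by
  have h := congrArg (PowerSeries.coeff (R := ℤ) 0) (poch_mul_inv 1)
  rw [coeff_mul_range] at h
  rw [PowerSeries.coeff_zero_eq_constantCoeff]
  simpa [qPoch_const] using h
lemma cI1_1 : PowerSeries.coeff (R := ℤ) 1 (qPochInv 1) = 1 := by
  have h := congrArg (PowerSeries.coeff (R := ℤ) 1) (poch_mul_inv 1)
  rw [coeff_mul_range] at h
  simp [Finset.sum_range_succ, cP1, cI1_0] at h
  linarith
lemma cI1_2 : PowerSeries.coeff (R := ℤ) 2 (qPochInv 1) = 1 := by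
  have h := congrArg (PowerSeries.coeff (R := ℤ) 2) (poch_mul_inv 1)
  rw [coeff_mul_range] at h
  simp [Finset.sum_range_succ, cP1, cI1_0, cI1_1] at h
  linarith
lemma cI1_3 : PowerSeries.coeff (R := ℤ) 3 (qPochInv 1) = 1 := by
  have h := congrArg (PowerSeries.coeff (R := ℤ) 3) (poch_mul_inv 1)
  rw [coeff_mul_range] at h
  simp [Finset.sum_range_succ, cP1, cI1_0, cI1_1, cI1_2] at h
  linarith

/- ### Coefficients of `hSeries 3` -/

lemma two_hExp3 (n : ℤ) : 2 * hExp 3 n = 3*n^2 + n := by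
  obtain ⟨k, hk⟩ := Int.even_mul_succ_self n
  have h2 : hExp 3 n = 3*k - n := by
    simp only [hExp]; rw [hk]; push_cast; omega
  rw [h2]; linear_combination -3*hk

lemma hExp3_range (n : ℤ) (m : ℕ) (hm : m ≤ 3) (h : hExp 3 n = m) :
    n = 0 ∨ n = -1 ∨ n = 1 := by
  have h2 := two_hExp3 n
  rw [h] at h2
  by_contra hc
  push_neg at hc
  have h' : 2 ≤ n ∨ n ≤ -2 := by omega
  have hm' : (m:ℤ) ≤ 3 := by exact_mod_cast hm
  rcases h' with h'|h' <;> nlinarith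

lemma ch3 (k : ℕ) (hk : k ≤ 3) : PowerSeries.coeff (R := ℤ) k (hSeries 3) =
    if k = 0 then 1 else if k = 3 then 0 else -1 := by
  rw [hSeries, PowerSeries.coeff_mk]
  interval_cases k
  · rw [tsum_eq_single (0:ℤ)]
    · decide
    · intro n hn
      rw [if_neg]
      intro h
      rcases hExp3_range n 0 (by norm_num) h with h'|h'|h' <;> subst h' <;>
        first | exact hn rfl | revert h; decide
  · rw [tsum_eq_single (-1:ℤ)]
    · decide
    · intro n hn
      rw [if_neg]
      intro h
      rcases hExp3_range n 1 (by norm_num) h with h'|h'|h' <;> subst h' <;>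
        first | exact hn rfl | revert h; decide
  · rw [tsum_eq_single (1:ℤ)]
    · decide
    · intro n hn
      rw [if_neg]
      intro h
      rcases hExp3_range n 2 (by norm_num) h with h'|h'|h' <;> subst h' <;>
        first | exact hn rfl | revert h; decide
  · have : ∀ n : ℤ, (if hExp 3 n = ((3:ℕ):ℤ) then eps 3 n else 0) = 0 := by
      intro n
      rw [if_neg]
      intro h
      rcases hExp3_range n 3 (by norm_num) h with h'|h'|h' <;> subst h' <;> revert h <;> decide
    simp only [this, tsum_zero]
    norm_num

lemma cH2 (k : ℕ) (hk : k ≤ 3) : PowerSeries.coeff (R := ℤ) k (hSeries 3 * hSeries 3) =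
    if k = 0 then 1 else if k = 1 then -2 else if k = 2 then -1 else 2 := by
  rw [coeff_mul_range]
  interval_cases k <;>
    simp [Finset.sum_range_succ, ch3]
lemma cH4 : PowerSeries.coeff (R := ℤ) 3 (hSeries 3 ^ 4) = 8 := by
  have h4 : hSeries 3 ^ 4 = (hSeries 3 * hSeries 3) * (hSeries 3 * hSeries 3) := by ring
  rw [h4, coeff_mul_range]
  simp [Finset.sum_range_succ, cH2]

/- ### Coefficients of `qPochInf ^ 2` -/

lemma cInf (k : ℕ) (hk : k ≤ 3) : PowerSeries.coeff (R := ℤ) k qPochInf =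
    if k = 0 then 1 else if k = 3 then 0 else -1 := by
  rw [qPochInf, PowerSeries.coeff_mk]
  interval_cases k
  · rw [cP1 0 (by norm_num)]; norm_num
  · rw [cP2 1 (by norm_num)]; norm_num
  · rw [cP3 2 (by norm_num)]
  · rw [cP4]; norm_num
lemma cInf2 (k : ℕ) (hk : k ≤ 3) : PowerSeries.coeff (R := ℤ) k (qPochInf ^ 2) =
    if k = 0 then 1 else if k = 1 then -2 else if k = 2 then -1 else 2 := by
  rw [sq, coeff_mul_range]
  interval_cases k <;>
    simp [Finset.sum_range_succ, cInf]

/- ### Coefficients of the double sum -/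

noncomputable def Fterm (p : ℕ × ℕ) : PowerSeries ℤ :=
  PowerSeries.C (R := ℤ) ((-1) ^ (p.1 + p.2)) *
    (PowerSeries.X : PowerSeries ℤ) ^ (p.1 * (p.1 + 1) / 2 + p.2 * (p.2 + 1) / 2) *
    qPochInv p.1 * qPochInv p.2 * qBinom (p.1 + p.2) p.2

lemma tri_ge (a : ℕ) : a ≤ a*(a+1)/2 := by
  rcases Nat.eq_zero_or_pos a with h|h
  · simp [h]
  · have : a*2 ≤ a*(a+1) := Nat.mul_le_mul_left a (by omega)
    omega

lemma cF_zero (m : ℕ) (p : ℕ × ℕ) (h : m < p.1*(p.1+1)/2 + p.2*(p.2+1)/2) :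
    PowerSeries.coeff (R := ℤ) m (Fterm p) = 0 := by
  refine PowerSeries.X_pow_dvd_iff.mp ?_ m h
  exact ⟨PowerSeries.C (R := ℤ) ((-1) ^ (p.1 + p.2)) * qPochInv p.1 * qPochInv p.2 *
    qBinom (p.1 + p.2) p.2, by rw [Fterm]; ring⟩

lemma cF_val (m a b : ℕ) (h : a*(a+1)/2 + b*(b+1)/2 ≤ m) :
    PowerSeries.coeff (R := ℤ) m (Fterm (a, b)) = (-1)^(a+b) *
      PowerSeries.coeff (R := ℤ) (m - (a*(a+1)/2 + b*(b+1)/2))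
        (qPochInv a * (qPochInv b * qBinom (a + b) b)) := by
  have h1 : Fterm (a, b) = PowerSeries.C (R := ℤ) ((-1) ^ (a + b)) *
      ((PowerSeries.X : PowerSeries ℤ) ^ (a*(a+1)/2 + b*(b+1)/2) *
        (qPochInv a * (qPochInv b * qBinom (a + b) b))) := by
    rw [Fterm]; ring
  obtain ⟨d, rfl⟩ : ∃ d, m = d + (a*(a+1)/2 + b*(b+1)/2) :=
    ⟨m - (a*(a+1)/2 + b*(b+1)/2), by omega⟩
  rw [h1, PowerSeries.coeff_C_mul, Nat.add_sub_cancel, PowerSeries.coeff_X_pow_mul]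

lemma cS_sum (m : ℕ) (hm : m ≤ 3) :
    PowerSeries.coeff (R := ℤ) m (seriesSum Fterm) =
      ∑ p ∈ Finset.range 4 ×ˢ Finset.range 4, PowerSeries.coeff (R := ℤ) m (Fterm p) := by
  rw [seriesSum, PowerSeries.coeff_mk]
  refine tsum_eq_sum ?_
  intro p hp
  refine cF_zero m p ?_
  simp only [Finset.mem_product, Finset.mem_range, not_and_or, not_lt] at hp
  have t1 := tri_ge p.1
  have t2 := tri_ge p.2
  omega

lemma R00 : qPochInv 0 * (qPochInv 0 * qBinom (0+0) 0) = 1 := by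
  rw [qBinom, cI0]
  norm_num [qPoch0_eq]
lemma R10 : qPochInv 1 * (qPochInv 0 * qBinom (1+0) 0) = qPochInv 1 := by
  rw [qBinom, cI0]
  have h := poch_mul_inv 1
  norm_num
  linear_combination qPochInv 1 * h
lemma R01 : qPochInv 0 * (qPochInv 1 * qBinom (0+1) 1) = qPochInv 1 := by
  rw [qBinom, cI0]
  have h := poch_mul_inv 1
  norm_num
  linear_combination qPochInv 1 * h
lemma R11 : qPochInv 1 * (qPochInv 1 * qBinom (1+1) 1) =
    (1 - X^2) * (qPochInv 1 * (qPochInv 1 * qPochInv 1)) := by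
  rw [qBinom, qPoch2_eq']
  have h := poch_mul_inv 1
  norm_num
  linear_combination (1 - X^2) * (qPochInv 1 * (qPochInv 1 * qPochInv 1)) * h

lemma cInv_const (n : ℕ) : PowerSeries.constantCoeff (R := ℤ) (qPochInv n) = 1 := by
  simp [qPochInv, PowerSeries.constantCoeff_invOfUnit]
lemma cBinom_const (n k : ℕ) : PowerSeries.constantCoeff (R := ℤ) (qBinom n k) = 1 := by
  simp [qBinom, qPoch_const, cInv_const]

lemma cT3 (k : ℕ) (hk : k ≤ 1) :
    PowerSeries.coeff (R := ℤ) k (qPochInv 1 * (qPochInv 1 * qPochInv 1)) =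
      if k = 0 then 1 else 3 := by
  have c2 : ∀ j ≤ 1, PowerSeries.coeff (R := ℤ) j (qPochInv 1 * qPochInv 1) =
      if j = 0 then 1 else 2 := by
    intro j hj
    rw [coeff_mul_range]
    interval_cases j <;> simp [Finset.sum_range_succ, cI1_0, cI1_1]
  rw [coeff_mul_range]
  interval_cases k <;>
    simp [Finset.sum_range_succ, cI1_0, cI1_1, c2 0 (by norm_num), c2 1 (by norm_num), coeff_mul_range]

lemma cR11 (k : ℕ) (hk : k ≤ 1) :
    PowerSeries.coeff (R := ℤ) k (qPochInv 1 * (qPochInv 1 * qBinom (1+1) 1)) =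
      if k = 0 then 1 else 3 := by
  rw [R11, coeff_mul_range]
  interval_cases k <;>
    simp [Finset.sum_range_succ, cT3 0 (by norm_num), cT3 1 (by norm_num),
      PowerSeries.coeff_X_pow, PowerSeries.coeff_one]

lemma cS (m : ℕ) (hm : m ≤ 3) : PowerSeries.coeff (R := ℤ) m (seriesSum Fterm) =
    if m = 0 then 1 else if m = 1 then -2 else if m = 2 then -1 else 3 := by
  rw [cS_sum m hm, Finset.sum_product]
  simp only [Finset.sum_range_succ, Finset.sum_range_zero]
  interval_cases m
  · rw [cF_val 0 0 0 (by norm_num), cF_zero 0 (0,1) (by norm_num), cF_zero 0 (0,2) (by norm_num),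
      cF_zero 0 (0,3) (by norm_num), cF_zero 0 (1,0) (by norm_num), cF_zero 0 (1,1) (by norm_num),
      cF_zero 0 (1,2) (by norm_num), cF_zero 0 (1,3) (by norm_num), cF_zero 0 (2,0) (by norm_num),
      cF_zero 0 (2,1) (by norm_num), cF_zero 0 (2,2) (by norm_num), cF_zero 0 (2,3) (by norm_num),
      cF_zero 0 (3,0) (by norm_num), cF_zero 0 (3,1) (by norm_num), cF_zero 0 (3,2) (by norm_num),
      cF_zero 0 (3,3) (by norm_num)]
    norm_num [cInv_const, cBinom_const]
  · rw [cF_val 1 0 0 (by norm_num), cF_val 1 0 1 (by norm_num), cF_zero 1 (0,2) (by norm_num),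
      cF_zero 1 (0,3) (by norm_num), cF_val 1 1 0 (by norm_num), cF_zero 1 (1,1) (by norm_num),
      cF_zero 1 (1,2) (by norm_num), cF_zero 1 (1,3) (by norm_num), cF_zero 1 (2,0) (by norm_num),
      cF_zero 1 (2,1) (by norm_num), cF_zero 1 (2,2) (by norm_num), cF_zero 1 (2,3) (by norm_num),
      cF_zero 1 (3,0) (by norm_num), cF_zero 1 (3,1) (by norm_num), cF_zero 1 (3,2) (by norm_num),
      cF_zero 1 (3,3) (by norm_num)]
    rw [R00, R10, R01]
    norm_num [cI1_0, PowerSeries.coeff_one]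
  · rw [cF_val 2 0 0 (by norm_num), cF_val 2 0 1 (by norm_num), cF_zero 2 (0,2) (by norm_num),
      cF_zero 2 (0,3) (by norm_num), cF_val 2 1 0 (by norm_num), cF_val 2 1 1 (by norm_num),
      cF_zero 2 (1,2) (by norm_num), cF_zero 2 (1,3) (by norm_num), cF_zero 2 (2,0) (by norm_num),
      cF_zero 2 (2,1) (by norm_num), cF_zero 2 (2,2) (by norm_num), cF_zero 2 (2,3) (by norm_num),
      cF_zero 2 (3,0) (by norm_num), cF_zero 2 (3,1) (by norm_num), cF_zero 2 (3,2) (by norm_num),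
      cF_zero 2 (3,3) (by norm_num)]
    rw [R00, R10, R01]
    norm_num [cI1_1, PowerSeries.coeff_one, cR11 0 (by norm_num)]
  · rw [cF_val 3 0 0 (by norm_num), cF_val 3 0 1 (by norm_num), cF_val 3 0 2 (by norm_num),
      cF_zero 3 (0,3) (by norm_num), cF_val 3 1 0 (by norm_num), cF_val 3 1 1 (by norm_num),
      cF_zero 3 (1,2) (by norm_num), cF_zero 3 (1,3) (by norm_num), cF_val 3 2 0 (by norm_num),
      cF_zero 3 (2,1) (by norm_num), cF_zero 3 (2,2) (by norm_num), cF_zero 3 (2,3) (by norm_num),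
      cF_zero 3 (3,0) (by norm_num), cF_zero 3 (3,1) (by norm_num), cF_zero 3 (3,2) (by norm_num),
      cF_zero 3 (3,3) (by norm_num)]
    rw [R00, R10, R01]
    norm_num [cI1_2, PowerSeries.coeff_one, cR11 1 (by norm_num), cInv_const, cBinom_const]


/-- The tail of the knot `8₁₈` is not `h_3⁴`:
`(q)_∞² · Σ_{a,b≥0} (−1)^{a+b} (q^{a(a+1)/2 + b(b+1)/2}/((q)_a (q)_b)) · [a+b choose b]_q
≠ h_3(q)⁴` in `ℤ[[q]]` (the left side begins `1 − 4q + 2q² + 9q³ − ⋯` while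
`h_3⁴ = (q)_∞⁴` begins `1 − 4q + 2q² + 8q³ − ⋯`). -/
theorem tail_8_18_ne_h3_pow4 :
    qPochInf ^ 2 * seriesSum (fun p : ℕ × ℕ =>
      PowerSeries.C (R := ℤ) ((-1) ^ (p.1 + p.2)) *
        (PowerSeries.X : PowerSeries ℤ) ^ (p.1 * (p.1 + 1) / 2 + p.2 * (p.2 + 1) / 2) *
        qPochInv p.1 * qPochInv p.2 * qBinom (p.1 + p.2) p.2)
      ≠ hSeries 3 ^ 4 := by
  intro h
  have hF : (fun p : ℕ × ℕ =>
      PowerSeries.C (R := ℤ) ((-1) ^ (p.1 + p.2)) *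
        (PowerSeries.X : PowerSeries ℤ) ^ (p.1 * (p.1 + 1) / 2 + p.2 * (p.2 + 1) / 2) *
        qPochInv p.1 * qPochInv p.2 * qBinom (p.1 + p.2) p.2) = Fterm := rfl
  rw [hF] at h
  have h3 := congrArg (PowerSeries.coeff (R := ℤ) 3) h
  rw [cH4, coeff_mul_range] at h3
  simp only [Finset.sum_range_succ, Finset.sum_range_zero] at h3
  rw [cInf2 0 (by norm_num), cInf2 1 (by norm_num), cInf2 2 (by norm_num), cInf2 3 (by norm_num),
    cS 0 (by norm_num), cS 1 (by norm_num), cS 2 (by norm_num), cS 3 (by norm_num)] at h3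
  norm_num at h3
end
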